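/- arXiv:1801.02088 — 3 statements merged into one kernel-verified Lean document; each statement's English description precedes it below -/
import Mathlib

section
/- Let (A, p, 0, ½, 1) be a mobi algebra. Then for all a, b, c, d, a1, a2, b1, b2 ∈ A: (1) p(p(a1,c,b1), ½, p(a2,c,b2)) = p(p(a2,c,b1), ½, p(a1,c,b2)); (2) p(p(a,c,b), ½, p(b,c,a)) = p(a, ½, b); (3) p(p(a, p(1,c,0), b), ½, p(a,c,d)) = p(a, ½, p(b,c,d)). -/
/-!
Since `p 1 c 0` plays the role of `1 - c`, axiom (A7) gives `p a (p 1 c 0) b = p b c a`; for `c = ½`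
this makes the midpoint operation `p · ½ ·` commutative. The medial law (A8) rewrites a midpoint of
two `c`-combinations as a `c`-combination of midpoints, through which this commutativity passes.
-/

/-- A mobi algebra: a set with a ternary operation `p` and constants `e0`, `half`, `e1`. -/
structure MobiAlgebra (A : Type*) where
  p : A → A → A → A
  e0 : A
  half : A
  e1 : A
  A1 : p e1 half e0 = half
  A2 : ∀ a, p e0 a e1 = a
  A3 : ∀ a b, p a b a = a
  A4 : ∀ a b, p a e0 b = a
  A5 : ∀ a b, p a e1 b = b
  A6 : ∀ a a' b, p a half b = p a' half b → a = a'
  A7 : ∀ a b c1 c2 c3, p a (p c1 c2 c3) b = p (p a c1 b) c2 (p a c3 b)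
  A8 : ∀ a1 a2 b1 b2 c,
    p (p a1 c b1) half (p a2 c b2) = p (p a1 half a2) c (p b1 half b2)

namespace MobiAlgebra

variable {A : Type*} (M : MobiAlgebra A)

theorem p_compl_eq_swap (a b c : A) : M.p a (M.p M.e1 c M.e0) b = M.p b c a := by
  rw [M.A7, M.A5, M.A4]

theorem p_half_comm (x y : A) : M.p x M.half y = M.p y M.half x := by
  rw [← M.p_compl_eq_swap, M.A1]

theorem p_half_exchange (a1 a2 b1 b2 c : A) :
    M.p (M.p a1 c b1) M.half (M.p a2 c b2) = M.p (M.p a2 c b1) M.half (M.p a1 c b2) := by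
  rw [M.A8, M.A8, M.p_half_comm a1 a2]

theorem p_half_swap (a b c : A) : M.p (M.p a c b) M.half (M.p b c a) = M.p a M.half b := by
  rw [M.A8, M.p_half_comm b a, M.A3]

theorem p_half_compl (a b c d : A) :
    M.p (M.p a (M.p M.e1 c M.e0) b) M.half (M.p a c d) = M.p a M.half (M.p b c d) := by
  rw [M.p_compl_eq_swap, M.p_half_exchange, M.A3]

end MobiAlgebra

/-- Proposition 2.4: properties (P41)-(P43) of a mobi algebra. -/
theorem mobi_prop_p4 {A : Type*} (M : MobiAlgebra A)
    (a b c d a1 a2 b1 b2 : A) :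
    M.p (M.p a1 c b1) M.half (M.p a2 c b2) =
      M.p (M.p a2 c b1) M.half (M.p a1 c b2) ∧
    M.p (M.p a c b) M.half (M.p b c a) = M.p a M.half b ∧
    M.p (M.p a (M.p M.e1 c M.e0) b) M.half (M.p a c d) =
      M.p a M.half (M.p b c d) :=
  ⟨M.p_half_exchange a1 a2 b1 b2 c, M.p_half_swap a b c, M.p_half_compl a b c d⟩
end

section
/- Let (A, p, 0, ½, 1) be a mobi algebra with derived operations ā = p(1,a,0), a·b = p(0,a,b), and a∘b = p(a,b,1). Then the operations · and ∘ are dual to each other: for all a, b ∈ A, the complement of a·b equals b̄ ∘ ā, and the complement of a∘b equals b̄ · ā. -/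
namespace MobiAlgebra

variable {A : Type*} (M : MobiAlgebra A)

-- The paper's `ā`, `a · b` and `a ∘ b`.
def compl (a : A) : A := M.p M.e1 a M.e0

def mul (a b : A) : A := M.p M.e0 a b

def circ (a b : A) : A := M.p a b M.e1

theorem compl_p (x c y : A) : M.compl (M.p x c y) = M.p (M.compl x) c (M.compl y) :=
  M.A7 _ _ _ _ _

theorem compl_e0 : M.compl M.e0 = M.e1 := M.A4 _ _

theorem compl_e1 : M.compl M.e1 = M.e0 := M.A5 _ _

theorem p_compl (x c y : A) : M.p x (M.compl c) y = M.p y c x := by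
  rw [compl, M.A7, M.A5, M.A4]

theorem compl_mul (a b : A) : M.compl (M.mul a b) = M.circ (M.compl b) (M.compl a) := by
  rw [mul, circ, compl_p, compl_e0, p_compl]

theorem compl_circ (a b : A) : M.compl (M.circ a b) = M.mul (M.compl b) (M.compl a) := by
  rw [mul, circ, compl_p, compl_e1, p_compl]

end MobiAlgebra

/-- The derived operations a·b = p(0,a,b) and a∘b = p(a,b,1) of a mobi
algebra are dual to each other via the complement ā = p(1,a,0):
¬(a·b) = b̄ ∘ ā and ¬(a∘b) = b̄ · ā. -/
theorem mobi_mul_circ_dual {A : Type*} (M : MobiAlgebra A) (a b : A) :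
    M.p M.e1 (M.p M.e0 a b) M.e0 =
      M.p (M.p M.e1 b M.e0) (M.p M.e1 a M.e0) M.e1 ∧
    M.p M.e1 (M.p a b M.e1) M.e0 =
      M.p M.e0 (M.p M.e1 b M.e0) (M.p M.e1 a M.e0) :=
  ⟨M.compl_mul a b, M.compl_circ a b⟩
end

section
/- Let (A, ¯(), ⊕, ·, 1) be an IMM* algebra such that for each a, b, c ∈ A the equation 1̄⊕x = (b̄·a)⊕(b·c) has a solution x in A, and let (A, p, 1̄, 1̄⊕1, 1) be its corresponding mobi algebra, i.e., 1̄ ⊕ p(a,b,c) = (b̄·a)⊕(b·c) for all a, b, c ∈ A. Then the multiplication · is commutative (a·b = b·a for all a, b ∈ A) if and only if p(p(a1,c,b1), d, p(a2,c,b2)) = p(p(a1,d,a2), c, p(b1,d,b2)) holds for all a1, b1, a2, b2, c, d ∈ A. -/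
/-- An IMM* algebra: like an IMM algebra but with cancellative `⊕`
(axioms (C1)-(C9)). -/
structure IMMStar (C : Type*) where
  inv : C → C
  oplus : C → C → C
  mul : C → C → C
  one : C
  C1 : ∀ a, oplus a a = a
  C2 : ∀ a b, oplus a b = oplus b a
  C3 : ∀ a a' b, oplus a b = oplus a' b → a = a'
  C4 : ∀ a b c d, oplus (oplus a b) (oplus c d) = oplus (oplus a c) (oplus b d)
  C5 : ∀ a b c, mul a (mul b c) = mul (mul a b) c
  C6 : ∀ a, mul a one = a
  C6' : ∀ a, mul one a = a
  C7 : ∀ a b c, mul a (oplus b c) = oplus (mul a b) (mul a c)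
  C7' : ∀ a b c, mul (oplus a b) c = oplus (mul a c) (mul b c)
  C8 : ∀ a, mul a (inv one) = inv one
  C8' : ∀ a, mul (inv one) a = inv one
  C9 : ∀ a, oplus (inv a) a = oplus (inv one) one


/-!
Write `0 := 1̄`. Since `⊕` is cancellative, `p` is determined by
`0 ⊕ p(a, b, c) = (b̄·a) ⊕ (b·c)`. Applying this twice (with (C7), (C8)) expresses
`(0 ⊕ 0) ⊕ (0 ⊕ p(p(a₁,c,b₁), d, p(a₂,c,b₂)))` as the sum of the four terms
`(d̄c̄)a₁, (d̄c)b₁, (dc̄)a₂, (dc)b₂`; the medial law swaps `c` and `d` together with `b₁` and `a₂`,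
which by (C4) is exactly commutativity of these coefficients. Conversely `p(0, a, b) = a·b`,
so the medial law at `a₁ = b₁ = a₂ = 0`, `b₂ = 1` reads `a·b = b·a`.
-/

namespace IMMStar

variable {A : Type*} (S : IMMStar A)

theorem oplus_left_cancel {x y y' : A} (h : S.oplus x y = S.oplus x y') : y = y' :=
  S.C3 y y' x (by rw [S.C2 y x, S.C2 y' x]; exact h)

def IsMobiOp (p : A → A → A → A) : Prop :=
  ∀ a b c, S.oplus (S.inv S.one) (p a b c) = S.oplus (S.mul (S.inv b) a) (S.mul b c)

namespace IsMobiOp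

variable {S} {p : A → A → A → A} (hp : S.IsMobiOp p)
include hp

theorem zero_left (a b : A) : p (S.inv S.one) a b = S.mul a b :=
  S.oplus_left_cancel (by rw [hp, S.C8])

theorem oplus_mul_apply (e a c b : A) :
    S.oplus (S.inv S.one) (S.mul e (p a c b)) =
      S.oplus (S.mul (S.mul e (S.inv c)) a) (S.mul (S.mul e c) b) := by
  have h := congrArg (S.mul e) (hp a c b)
  rwa [S.C7, S.C7, S.C8, S.C5, S.C5] at h

theorem oplus_apply_apply (a₁ b₁ a₂ b₂ c d : A) :
    S.oplus (S.oplus (S.inv S.one) (S.inv S.one))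
        (S.oplus (S.inv S.one) (p (p a₁ c b₁) d (p a₂ c b₂))) =
      S.oplus
        (S.oplus (S.mul (S.mul (S.inv d) (S.inv c)) a₁) (S.mul (S.mul (S.inv d) c) b₁))
        (S.oplus (S.mul (S.mul d (S.inv c)) a₂) (S.mul (S.mul d c) b₂)) := by
  rw [hp, S.C4, hp.oplus_mul_apply, hp.oplus_mul_apply]

theorem medial_of_mul_comm (hc : ∀ a b, S.mul a b = S.mul b a) (a₁ b₁ a₂ b₂ c d : A) :
    p (p a₁ c b₁) d (p a₂ c b₂) = p (p a₁ d a₂) c (p b₁ d b₂) := by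
  apply S.oplus_left_cancel
  apply S.oplus_left_cancel
  rw [hp.oplus_apply_apply, hp.oplus_apply_apply,
    hc (S.inv d) (S.inv c), hc (S.inv d) c, hc d (S.inv c), hc d c, S.C4]

theorem mul_comm_of_medial
    (hmed : ∀ a₁ b₁ a₂ b₂ c d, p (p a₁ c b₁) d (p a₂ c b₂) = p (p a₁ d a₂) c (p b₁ d b₂))
    (a b : A) : S.mul a b = S.mul b a := by
  have h := hmed (S.inv S.one) (S.inv S.one) (S.inv S.one) S.one b a
  simpa only [hp.zero_left, S.C8, S.C6] using h

end IsMobiOp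

end IMMStar

theorem IMMStar_comm_iff_medial_general {A : Type*} (S : IMMStar A)
    (M : MobiAlgebra A)
    (hp : ∀ a b c, S.oplus (S.inv S.one) (M.p a b c) =
      S.oplus (S.mul (S.inv b) a) (S.mul b c)) :
    (∀ a b, S.mul a b = S.mul b a) ↔
    (∀ a1 b1 a2 b2 c d,
      M.p (M.p a1 c b1) d (M.p a2 c b2) =
        M.p (M.p a1 d a2) c (M.p b1 d b2)) :=
  ⟨IMMStar.IsMobiOp.medial_of_mul_comm hp, IMMStar.IsMobiOp.mul_comm_of_medial hp⟩

/-- Proposition 6.5: for an IMM* algebra satisfying the solvability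
condition, with its corresponding mobi algebra, the multiplication is
commutative iff the generalized medial law holds. -/
theorem IMMStar_comm_iff_medial {A : Type*} (S : IMMStar A)
    (hsol : ∀ a b c : A, ∃ x : A,
      S.oplus (S.inv S.one) x = S.oplus (S.mul (S.inv b) a) (S.mul b c))
    (M : MobiAlgebra A)
    (h0 : M.e0 = S.inv S.one)
    (hh : M.half = S.oplus (S.inv S.one) S.one)
    (h1 : M.e1 = S.one)
    (hp : ∀ a b c, S.oplus (S.inv S.one) (M.p a b c) =
      S.oplus (S.mul (S.inv b) a) (S.mul b c)) :
    (∀ a b, S.mul a b = S.mul b a) ↔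
    (∀ a1 b1 a2 b2 c d,
      M.p (M.p a1 c b1) d (M.p a2 c b2) =
        M.p (M.p a1 d a2) c (M.p b1 d b2)) :=
  IMMStar_comm_iff_medial_general S M hp
end
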